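/- If A = x^a(x+1)^b(x+α)^c(x+α+1)^d ∈ F_4[x] is trivially bi-unitary perfect with ω(A) ≥ 3, then ω(A) = 4, all of a, b, c, d lie in T = {2} ∪ {2^n − 1 : n ≥ 1}, a = b, and c = d; equivalently, A = A₁A₂ with A₁, A₂ ∈ Σ. -/

import Mathlib

open Polynomial

variable {F : Type*} [Field F]

/-- `D` is a (monic) unitary divisor of `S`: `D ∣ S` and `gcd(D, S/D) = 1`. -/
def IsUnitaryDivisor (D S : Polynomial F) : Prop :=
  D.Monic ∧ D ∣ S ∧ IsCoprime D (S / D)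

/-- `D` is a (monic) bi-unitary divisor of `S`: `gcd_u(D, S/D) = 1`, i.e. the only common
monic unitary divisor of `D` and `S/D` is `1`. -/
def IsBiunitaryDivisor (D S : Polynomial F) : Prop :=
  D.Monic ∧ D ∣ S ∧
    ∀ G : Polynomial F, IsUnitaryDivisor G D → IsUnitaryDivisor G (S / D) → G = 1

/-- `σ(S)`: the sum of all monic divisors of `S`. -/
noncomputable def sigma' (S : Polynomial F) : Polynomial F :=
  ∑ᶠ D ∈ {D : Polynomial F | D.Monic ∧ D ∣ S}, D

/-- `σ**(S)`: the sum of all monic bi-unitary divisors of `S`. -/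
noncomputable def sigmaStarStar (S : Polynomial F) : Polynomial F :=
  ∑ᶠ D ∈ {D : Polynomial F | IsBiunitaryDivisor D S}, D

/-- `S` is bi-unitary perfect: `σ**(S) = S`. -/
def IsBUP (S : Polynomial F) : Prop := sigmaStarStar S = S

/-- `ω(S)`: the number of distinct monic irreducible factors of `S`. -/
noncomputable def omegaCount (S : Polynomial F) : ℕ :=
  {P : Polynomial F | P.Monic ∧ Irreducible P ∧ P ∣ S}.ncard

/-- `A` is trivially bi-unitary perfect: it is b.u.p. and is a product `A₀ ⋯ A_r` (`r ≥ 1`)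
of pairwise coprime non-unit b.u.p. polynomials. -/
def IsTriviallyBUP (A : Polynomial F) : Prop :=
  IsBUP A ∧ ∃ (r : ℕ) (B : Fin (r + 1) → Polynomial F), 1 ≤ r ∧
    A = ∏ i, B i ∧ (∀ i, IsBUP (B i) ∧ ¬ IsUnit (B i)) ∧
    ∀ i j, i ≠ j → IsCoprime (B i) (B j)

/-- `A` is indecomposable bi-unitary perfect: b.u.p. but not trivially b.u.p. -/
def IsIBUP (A : Polynomial F) : Prop := IsBUP A ∧ ¬ IsTriviallyBUP A

/-- The field with four elements. -/
abbrev F4 := GaloisField 2 2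

/-- The exponent set `𝒯 = {2} ∪ {2^n - 1 : n ≥ 1}`. -/
def TSet : Set ℕ := {r | 0 < r ∧ (r = 2 ∨ ∃ n : ℕ, 1 ≤ n ∧ r = 2 ^ n - 1)}

/-- The set `Σ = {(x²+x)^r, (x²+x+1)^r : r ∈ 𝒯}`. -/
def SigmaSet : Set (Polynomial F4) :=
  {A | ∃ r ∈ TSet, A = (X ^ 2 + X) ^ r ∨ A = (X ^ 2 + X + 1) ^ r}

/-!
Over any field, the bi-unitary divisors of `(X - u)^e (X - v)^f` (`u ≠ v`) are the products
`(X - u)^i (X - v)^j` in which neither exponent is a nonzero half of `e` resp. `f`, so `σ**` of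
it is `S_e(X - u) S_f(X - v)`, where `S_e := biunitarySum e`. If it is b.u.p., then
`S_e(X - u)`, being prime to `X - u`, is a power of `X - v`, and symmetrically; hence `e = f`
and, translating by `u`, `S_e(X) = (X - c)^e` with `c = v - u`.

In characteristic `2`, comparing the coefficients of `X^(e-1)` in `S_e(X) = (X - c)^e` shows
that `e = 2` or `e` is odd and `c = 1`. In the odd case `(X - 1) S_e = X^(e+1) - 1` equals
`(X - 1)^(e+1)`, and the multiplicity of the root `1` of `X^n - 1` is the `2`-part of `n`, so
`e + 1` is a power of `2`.

Consequently a b.u.p. split polynomial with at most two roots has roots `x, x + 1` of equal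
multiplicity in `T`, and it cannot have a single root. The components of a trivially b.u.p.
`A` over `F₄` have pairwise disjoint root sets with at least two roots each; as `|F₄| = 4`,
there are exactly two components, each with two roots, and they cover `F₄`.
-/

open Finset

def biunitaryExponents (e : ℕ) : Finset ℕ := {i ∈ range (e + 1) | i = 0 ∨ 2 * i ≠ e}

lemma zero_mem_biunitaryExponents (e : ℕ) : 0 ∈ biunitaryExponents e := by
  simp [biunitaryExponents]

lemma mem_biunitaryExponents_self (e : ℕ) : e ∈ biunitaryExponents e := by
  simp only [biunitaryExponents, mem_filter, mem_range]
  omega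

noncomputable def biunitarySum (e : ℕ) : F[X] := ∑ i ∈ biunitaryExponents e, X ^ i

lemma biunitarySum_comp (e : ℕ) (P : F[X]) :
    (biunitarySum e).comp P = ∑ i ∈ biunitaryExponents e, P ^ i := by
  simp [biunitarySum]

lemma coeff_biunitarySum (e n : ℕ) :
    (biunitarySum e : F[X]).coeff n = if n ∈ biunitaryExponents e then 1 else 0 := by
  simp [biunitarySum, coeff_X_pow]

lemma natDegree_biunitarySum (e : ℕ) : (biunitarySum e : F[X]).natDegree = e := by
  refine natDegree_eq_of_le_of_coeff_ne_zero ?_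
    (by simp [coeff_biunitarySum, mem_biunitaryExponents_self])
  refine natDegree_le_iff_coeff_eq_zero.mpr fun n hn => ?_
  simp only [coeff_biunitarySum, biunitaryExponents, mem_filter, mem_range]
  split_ifs with h
  · exact absurd (Nat.cast_lt.mp hn) (by omega)
  · rfl

lemma monic_biunitarySum (e : ℕ) : (biunitarySum e : F[X]).Monic := by
  rw [Monic, leadingCoeff, natDegree_biunitarySum, coeff_biunitarySum,
    if_pos (mem_biunitaryExponents_self e)]

lemma monic_biunitarySum_comp (e : ℕ) (u : F) : ((biunitarySum e).comp (X - C u)).Monic :=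
  (monic_biunitarySum e).comp (monic_X_sub_C u) (by simp)

lemma eval_zero_biunitarySum (e : ℕ) : (biunitarySum e : F[X]).eval 0 = 1 := by
  rw [← coeff_zero_eq_eval_zero, coeff_biunitarySum, if_pos (zero_mem_biunitaryExponents e)]

lemma X_sub_one_mul_biunitarySum_of_odd {e : ℕ} (he : Odd e) :
    (X - 1) * (biunitarySum e : F[X]) = X ^ (e + 1) - 1 := by
  have hexp : biunitaryExponents e = range (e + 1) := by
    obtain ⟨k, rfl⟩ := he
    ext i
    simp only [biunitaryExponents, mem_filter, mem_range]
    omega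
  rw [biunitarySum, hexp, mul_comm, geom_sum_mul]

section TwoRoots

variable {u v : F}

lemma rootMultiplicity_X_sub_C_pow_mul_X_sub_C_pow (huv : u ≠ v) (i j : ℕ) :
    rootMultiplicity u ((X - C u) ^ i * (X - C v) ^ j) = i := by
  rw [rootMultiplicity_mul (by simp [X_sub_C_ne_zero]), rootMultiplicity_X_sub_C_pow,
    rootMultiplicity_eq_zero (by simp [sub_ne_zero.mpr huv]), add_zero]

lemma X_sub_C_pow_mul_X_sub_C_pow_injective (huv : u ≠ v) {i j k l : ℕ}
    (h : (X - C u) ^ i * (X - C v) ^ j = (X - C u) ^ k * (X - C v) ^ l) : i = k ∧ j = l := by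
  refine ⟨?_, ?_⟩
  · simpa only [rootMultiplicity_X_sub_C_pow_mul_X_sub_C_pow huv] using
      congrArg (rootMultiplicity u) h
  · rw [mul_comm, mul_comm (_ ^ k)] at h
    simpa only [rootMultiplicity_X_sub_C_pow_mul_X_sub_C_pow huv.symm] using
      congrArg (rootMultiplicity v) h

lemma Polynomial.Monic.eq_X_sub_C_pow_of_dvd {D : F[X]} (hD : D.Monic) {e : ℕ}
    (h : D ∣ (X - C u) ^ e) : ∃ i ≤ e, D = (X - C u) ^ i := by
  obtain ⟨i, hi, hassoc⟩ := (dvd_prime_pow (irreducible_X_sub_C u).prime e).mp h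
  exact ⟨i, hi, eq_of_monic_of_associated hD ((monic_X_sub_C u).pow i) hassoc⟩

lemma Polynomial.Monic.eq_X_sub_C_pow_mul_X_sub_C_pow_of_dvd {D : F[X]} (hD : D.Monic)
    {e f : ℕ} (h : D ∣ (X - C u) ^ e * (X - C v) ^ f) :
    ∃ i ≤ e, ∃ j ≤ f, D = (X - C u) ^ i * (X - C v) ^ j := by
  obtain ⟨D₁, D₂, h₁, h₂, rfl⟩ := exists_dvd_and_dvd_of_dvd_mul h
  obtain ⟨i, hi, hu⟩ := (dvd_prime_pow (irreducible_X_sub_C u).prime e).mp h₁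
  obtain ⟨j, hj, hv⟩ := (dvd_prime_pow (irreducible_X_sub_C v).prime f).mp h₂
  exact ⟨i, hi, j, hj, eq_of_monic_of_associated hD
    (((monic_X_sub_C u).pow i).mul ((monic_X_sub_C v).pow j)) (hu.mul_mul hv)⟩

lemma X_sub_C_pow_mul_X_sub_C_pow_div {i j e f : ℕ} (hi : i ≤ e) (hj : j ≤ f) :
    (X - C u) ^ e * (X - C v) ^ f / ((X - C u) ^ i * (X - C v) ^ j) =
      (X - C u) ^ (e - i) * (X - C v) ^ (f - j) := by
  rw [← pow_mul_pow_sub _ hi, ← pow_mul_pow_sub _ hj, mul_mul_mul_comm,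
    mul_div_cancel_left₀ _ (by simp [X_sub_C_ne_zero])]

lemma isCoprime_pow_pow_iff {R : Type*} [CommSemiring R] {p : R} (hp : ¬IsUnit p) {i k : ℕ} :
    IsCoprime (p ^ i) (p ^ k) ↔ i = 0 ∨ k = 0 := by
  rcases Nat.eq_zero_or_pos i with rfl | hi
  · simp [isCoprime_one_left]
  rcases Nat.eq_zero_or_pos k with rfl | hk
  · simp [isCoprime_one_right]
  rw [IsCoprime.pow_left_iff hi, IsCoprime.pow_right_iff hk, isCoprime_self]
  simp only [hp, false_iff]
  omega

lemma isCoprime_X_sub_C_pow_mul_X_sub_C_pow_iff (huv : u ≠ v) {i j k l : ℕ} :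
    IsCoprime ((X - C u) ^ i * (X - C v) ^ j) ((X - C u) ^ k * (X - C v) ^ l) ↔
      (i = 0 ∨ k = 0) ∧ (j = 0 ∨ l = 0) := by
  have huv' : IsCoprime (X - C u) (X - C v) :=
    isCoprime_X_sub_C_of_isUnit_sub (sub_ne_zero.mpr huv).isUnit
  simp only [IsCoprime.mul_left_iff, IsCoprime.mul_right_iff,
    isCoprime_pow_pow_iff (not_isUnit_X_sub_C u), isCoprime_pow_pow_iff (not_isUnit_X_sub_C v),
    huv'.pow, huv'.symm.pow, and_true, true_and]

lemma isUnitaryDivisor_X_sub_C_pow_mul_X_sub_C_pow_iff (huv : u ≠ v) {i j : ℕ} {G : F[X]} :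
    IsUnitaryDivisor G ((X - C u) ^ i * (X - C v) ^ j) ↔
      ∃ k l, (k = 0 ∨ k = i) ∧ (l = 0 ∨ l = j) ∧ G = (X - C u) ^ k * (X - C v) ^ l := by
  constructor
  · rintro ⟨hG, hdvd, hcop⟩
    obtain ⟨k, hk, l, hl, rfl⟩ := hG.eq_X_sub_C_pow_mul_X_sub_C_pow_of_dvd hdvd
    rw [X_sub_C_pow_mul_X_sub_C_pow_div hk hl,
      isCoprime_X_sub_C_pow_mul_X_sub_C_pow_iff huv] at hcop
    exact ⟨k, l, by omega, by omega, rfl⟩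
  · rintro ⟨k, l, hk, hl, rfl⟩
    have hki : k ≤ i := by omega
    have hlj : l ≤ j := by omega
    refine ⟨((monic_X_sub_C u).pow k).mul ((monic_X_sub_C v).pow l),
      mul_dvd_mul (pow_dvd_pow _ hki) (pow_dvd_pow _ hlj), ?_⟩
    rw [X_sub_C_pow_mul_X_sub_C_pow_div hki hlj, isCoprime_X_sub_C_pow_mul_X_sub_C_pow_iff huv]
    omega

lemma isBiunitaryDivisor_X_sub_C_pow_mul_X_sub_C_pow_iff (huv : u ≠ v) {e f : ℕ} {D : F[X]} :
    IsBiunitaryDivisor D ((X - C u) ^ e * (X - C v) ^ f) ↔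
      ∃ i ∈ biunitaryExponents e, ∃ j ∈ biunitaryExponents f,
        D = (X - C u) ^ i * (X - C v) ^ j := by
  simp only [biunitaryExponents, mem_filter, mem_range]
  constructor
  · rintro ⟨hD, hdvd, hcommon⟩
    obtain ⟨i, hi, j, hj, rfl⟩ := hD.eq_X_sub_C_pow_mul_X_sub_C_pow_of_dvd hdvd
    rw [X_sub_C_pow_mul_X_sub_C_pow_div hi hj] at hcommon
    have h_ne_one : ∀ k l, (X - C u) ^ k * (X - C v) ^ l = 1 → k = 0 ∧ l = 0 := fun k l h =>
      X_sub_C_pow_mul_X_sub_C_pow_injective huv (h.trans (by simp))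
    refine ⟨i, ⟨by omega, ?_⟩, j, ⟨by omega, ?_⟩, rfl⟩
    -- otherwise `(X - u)^i`, resp. `(X - v)^j`, is a common unitary divisor of `D` and `N / D`
    · by_contra! hi'
      refine absurd (h_ne_one i 0 (hcommon _ ?_ ?_)).1 hi'.1 <;>
        exact (isUnitaryDivisor_X_sub_C_pow_mul_X_sub_C_pow_iff huv).mpr
          ⟨i, 0, by omega, by omega, rfl⟩
    · by_contra! hj'
      refine absurd (h_ne_one 0 j (hcommon _ ?_ ?_)).2 hj'.1 <;>
        exact (isUnitaryDivisor_X_sub_C_pow_mul_X_sub_C_pow_iff huv).mpr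
          ⟨0, j, by omega, by omega, rfl⟩
  · rintro ⟨i, ⟨hi, hi'⟩, j, ⟨hj, hj'⟩, rfl⟩
    refine ⟨((monic_X_sub_C u).pow i).mul ((monic_X_sub_C v).pow j),
      mul_dvd_mul (pow_dvd_pow _ (by omega)) (pow_dvd_pow _ (by omega)), fun G hG hG' => ?_⟩
    rw [X_sub_C_pow_mul_X_sub_C_pow_div (by omega) (by omega)] at hG'
    obtain ⟨k, l, hk, hl, rfl⟩ := (isUnitaryDivisor_X_sub_C_pow_mul_X_sub_C_pow_iff huv).mp hG
    obtain ⟨k', l', hk', hl', h⟩ := (isUnitaryDivisor_X_sub_C_pow_mul_X_sub_C_pow_iff huv).mp hG'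
    obtain ⟨rfl, rfl⟩ := X_sub_C_pow_mul_X_sub_C_pow_injective huv h
    obtain rfl : k = 0 := by omega
    obtain rfl : l = 0 := by omega
    simp

lemma sigmaStarStar_X_sub_C_pow_mul_X_sub_C_pow (huv : u ≠ v) (e f : ℕ) :
    sigmaStarStar ((X - C u) ^ e * (X - C v) ^ f) =
      (biunitarySum e).comp (X - C u) * (biunitarySum f).comp (X - C v) := by
  have hset : {D | IsBiunitaryDivisor D ((X - C u) ^ e * (X - C v) ^ f)} =
      (fun p : ℕ × ℕ => (X - C u) ^ p.1 * (X - C v) ^ p.2) ''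
        ↑(biunitaryExponents e ×ˢ biunitaryExponents f) := by
    ext D
    simp [isBiunitaryDivisor_X_sub_C_pow_mul_X_sub_C_pow_iff huv, eq_comm, and_assoc]
  rw [sigmaStarStar, hset, finsum_mem_image
      fun p _ q _ h => Prod.ext_iff.mpr (X_sub_C_pow_mul_X_sub_C_pow_injective huv h),
    finsum_mem_coe_finset, sum_product, biunitarySum_comp, biunitarySum_comp, sum_mul_sum]

end TwoRoots

section UnitMultiple

variable {l : F} {N : F[X]}

lemma isUnitaryDivisor_C_mul_iff (hl : l ≠ 0) {G : F[X]} :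
    IsUnitaryDivisor G (C l * N) ↔ IsUnitaryDivisor G N := by
  have hu : IsUnit (C l) := isUnit_C.mpr hl.isUnit
  refine and_congr_right fun hG => ?_
  rw [hu.dvd_mul_left]
  refine and_congr_right fun hdvd => ?_
  rw [EuclideanDomain.mul_div_assoc _ hdvd, isCoprime_mul_unit_left_right hu]

lemma isBiunitaryDivisor_C_mul_iff (hl : l ≠ 0) {D : F[X]} :
    IsBiunitaryDivisor D (C l * N) ↔ IsBiunitaryDivisor D N := by
  have hu : IsUnit (C l) := isUnit_C.mpr hl.isUnit
  refine and_congr_right fun hD => ?_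
  rw [hu.dvd_mul_left]
  refine and_congr_right fun hdvd => ?_
  simp only [EuclideanDomain.mul_div_assoc _ hdvd, isUnitaryDivisor_C_mul_iff hl]

lemma sigmaStarStar_C_mul (hl : l ≠ 0) : sigmaStarStar (C l * N) = sigmaStarStar N := by
  simp only [sigmaStarStar, isBiunitaryDivisor_C_mul_iff hl]

end UnitMultiple

section Comparison

variable {u v : F} {e f : ℕ}

lemma biunitarySum_comp_eq_of_dvd
    (h : (biunitarySum e).comp (X - C u) ∣ (X - C u) ^ e * (X - C v) ^ f) :
    e ≤ f ∧ (biunitarySum e).comp (X - C u) = (X - C v) ^ e := by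
  have hcop : IsCoprime ((biunitarySum e).comp (X - C u)) ((X - C u) ^ e) := by
    refine IsCoprime.pow_right ((irreducible_X_sub_C u).coprime_iff_not_dvd.mpr ?_).symm
    rw [dvd_iff_isRoot, IsRoot, eval_comp]
    simp [eval_zero_biunitarySum]
  obtain ⟨j, hj, hS⟩ := (monic_biunitarySum_comp e u).eq_X_sub_C_pow_of_dvd
    (hcop.dvd_of_dvd_mul_left h)
  have hje : j = e := by
    have := congrArg natDegree hS
    rwa [natDegree_comp, natDegree_biunitarySum, natDegree_X_sub_C, natDegree_pow,
      natDegree_X_sub_C, mul_one, mul_one, eq_comm] at this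
  exact ⟨hje ▸ hj, hje ▸ hS⟩

lemma IsBUP.biunitarySum_comp_eq {l : F} (huv : u ≠ v) (hl : l ≠ 0)
    (h : IsBUP (C l * ((X - C u) ^ e * (X - C v) ^ f))) :
    e = f ∧ (biunitarySum e).comp (X - C u) = (X - C v) ^ e := by
  have hσ : (biunitarySum e).comp (X - C u) * (biunitarySum f).comp (X - C v) =
      C l * ((X - C u) ^ e * (X - C v) ^ f) := by
    rw [← sigmaStarStar_X_sub_C_pow_mul_X_sub_C_pow huv, ← sigmaStarStar_C_mul hl]
    exact h
  have hu : IsUnit (C l) := isUnit_C.mpr hl.isUnit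
  obtain ⟨hef, hS⟩ := biunitarySum_comp_eq_of_dvd (v := v) (f := f)
    (hu.dvd_mul_left.mp (Dvd.intro _ hσ))
  obtain ⟨hfe, -⟩ := biunitarySum_comp_eq_of_dvd (u := v) (v := u) (e := f) (f := e)
    (hu.dvd_mul_left.mp (Dvd.intro_left _ (hσ.trans (by ring))))
  exact ⟨le_antisymm hef hfe, hS⟩

end Comparison

lemma Polynomial.rootMultiplicity_pow {R : Type*} [CommRing R] [IsDomain R] (x : R) (P : R[X])
    (n : ℕ) :
    rootMultiplicity x (P ^ n) = n * rootMultiplicity x P := by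
  classical
  rw [← count_roots, roots_pow, Multiset.count_nsmul, count_roots]

lemma X_pow_sub_one_ne_zero {n : ℕ} (hn : n ≠ 0) : (X ^ n - 1 : F[X]) ≠ 0 := by
  simpa using X_pow_sub_C_ne_zero (Nat.pos_of_ne_zero hn) (1 : F)

lemma rootMultiplicity_one_X_pow_sub_one (p : ℕ) [Fact p.Prime] [CharP F p] {n : ℕ}
    (hn : n ≠ 0) : rootMultiplicity 1 (X ^ n - 1 : F[X]) = ordProj[p] n := by
  set m := ordCompl[p] n
  have hm : ¬p ∣ m := Nat.not_dvd_ordCompl Fact.out hn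
  have hm0 : m ≠ 0 := fun h => hm (h ▸ dvd_zero p)
  have hsplit : (X ^ n - 1 : F[X]) = (X ^ m - 1) ^ ordProj[p] n := by
    rw [sub_pow_char_pow, one_pow, ← pow_mul, mul_comm, Nat.ordProj_mul_ordCompl_eq_self]
  have hsimple : rootMultiplicity 1 (X ^ m - 1 : F[X]) = 1 := by
    refine le_antisymm (rootMultiplicity_le_one_of_separable
      (X_pow_sub_one_separable_iff.mpr ?_) 1) ?_
    · rwa [Ne, CharP.cast_eq_zero_iff F p]
    · exact (rootMultiplicity_pos (X_pow_sub_one_ne_zero hm0)).mpr (by simp)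
  rw [hsplit, rootMultiplicity_pow, hsimple, mul_one]

lemma odd_and_eq_one_of_biunitarySum_eq [CharP F 2] {c : F} {e : ℕ} (he : e ≠ 0) (he2 : e ≠ 2)
    (h : (biunitarySum e : F[X]) = (X - C c) ^ e) : Odd e ∧ c = 1 := by
  have hmem : e - 1 ∈ biunitaryExponents e := by
    simp only [biunitaryExponents, mem_filter, mem_range]
    omega
  have hcoeff := congrArg (coeff · (e - 1)) h
  simp only [coeff_biunitarySum, if_pos hmem, CharTwo.sub_eq_add, coeff_X_add_C_pow,
    Nat.sub_sub_self (Nat.one_le_iff_ne_zero.mpr he), pow_one,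
    Nat.choose_symm (Nat.one_le_iff_ne_zero.mpr he), Nat.choose_one_right,
    CharTwo.natCast_eq_ite] at hcoeff
  split_ifs at hcoeff with heven
  · exact absurd hcoeff (by simp)
  · exact ⟨Nat.not_even_iff_odd.mp heven, by simpa using hcoeff.symm⟩

lemma eq_one_and_mem_TSet_of_biunitarySum_eq [CharP F 2] {c : F} {e : ℕ} (he : e ≠ 0)
    (h : (biunitarySum e : F[X]) = (X - C c) ^ e) : c = 1 ∧ e ∈ TSet := by
  by_cases he2 : e = 2
  · subst he2
    have heval := congrArg (eval 1) h
    rw [biunitarySum, show biunitaryExponents 2 = {0, 2} by decide] at heval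
    simp only [sum_pair two_ne_zero.symm, eval_add, eval_pow, eval_X, one_pow,
      CharTwo.add_self_eq_zero, eval_sub, eval_C] at heval
    exact ⟨(sub_eq_zero.mp (pow_eq_zero_iff two_ne_zero |>.mp heval.symm)).symm,
      two_pos, Or.inl rfl⟩
  obtain ⟨hodd, rfl⟩ := odd_and_eq_one_of_biunitarySum_eq he he2 h
  have hpow : (X ^ (e + 1) - 1 : F[X]) = (X - C 1) ^ (e + 1) := by
    rw [← X_sub_one_mul_biunitarySum_of_odd hodd, h, pow_succ', C_1]
  have hmult := congrArg (rootMultiplicity 1) hpow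
  rw [rootMultiplicity_one_X_pow_sub_one 2 (by omega : e + 1 ≠ 0),
    rootMultiplicity_X_sub_C_pow] at hmult
  refine ⟨rfl, Nat.pos_of_ne_zero he,
    Or.inr ⟨(e + 1).factorization 2, Nat.pos_of_ne_zero fun hs => ?_, by omega⟩⟩
  rw [hs, pow_zero] at hmult
  omega

lemma IsBUP.eq_and_add_eq_one_and_mem_TSet [CharP F 2] {u v l : F} {e f : ℕ} (huv : u ≠ v)
    (hl : l ≠ 0) (hef : e + f ≠ 0) (h : IsBUP (C l * ((X - C u) ^ e * (X - C v) ^ f))) :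
    e = f ∧ u + v = 1 ∧ e ∈ TSet := by
  obtain ⟨rfl, hS⟩ := h.biunitarySum_comp_eq huv hl
  have hshift : (biunitarySum e : F[X]) = (X - C (v - u)) ^ e := by
    have := congrArg (·.comp (X + C u)) hS
    simp only [comp_assoc, sub_comp, X_comp, C_comp, pow_comp] at this
    rwa [add_sub_cancel_right, comp_X, add_sub_assoc, ← C_sub, ← neg_sub v u, C_neg,
      ← sub_eq_add_neg] at this
  obtain ⟨hvu, he⟩ := eq_one_and_mem_TSet_of_biunitarySum_eq (by omega) hshift
  refine ⟨rfl, ?_, he⟩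
  rwa [CharTwo.sub_eq_add, add_comm] at hvu

section Splitting

variable [DecidableEq F] {B : F[X]}

lemma Polynomial.Splits.eq_C_mul_X_sub_C_pow_mul_X_sub_C_pow (hB : B.Splits) {u v : F}
    (huv : u ≠ v) (hroots : B.roots.toFinset ⊆ {u, v}) :
    B = C B.leadingCoeff *
      ((X - C u) ^ rootMultiplicity u B * (X - C v) ^ rootMultiplicity v B) := by
  conv_lhs => rw [hB.eq_prod_roots]
  rw [prod_multiset_map_count, prod_subset hroots fun x _ hx => by
    rw [Multiset.count_eq_zero_of_notMem (by simpa using hx), pow_zero], prod_pair huv,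
    count_roots, count_roots]

lemma mem_roots_toFinset_iff_rootMultiplicity_pos (h0 : B ≠ 0) {x : F} :
    x ∈ B.roots.toFinset ↔ 0 < rootMultiplicity x B := by
  rw [Multiset.mem_toFinset, mem_roots h0, rootMultiplicity_pos h0]

lemma IsBUP.rootMultiplicity_add_one [CharP F 2] (hB : IsBUP B) (hs : B.Splits) (h0 : B ≠ 0)
    (hcard : B.roots.toFinset.card ≤ 2) {x : F} (hx : x ∈ B.roots.toFinset) :
    rootMultiplicity (x + 1) B = rootMultiplicity x B ∧ rootMultiplicity x B ∈ TSet := by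
  obtain ⟨y, hxy, hsub⟩ : ∃ y, x ≠ y ∧ B.roots.toFinset ⊆ {x, y} := by
    by_cases h : ∃ y ∈ B.roots.toFinset, y ≠ x
    · obtain ⟨y, hy, hyx⟩ := h
      refine ⟨y, hyx.symm, (eq_of_subset_of_card_le ?_ ?_).symm.subset⟩
      · exact insert_subset hx (singleton_subset_iff.mpr hy)
      · rwa [card_pair hyx.symm]
    · push Not at h
      exact ⟨x + 1, by simp, fun z hz => by simp [h z hz]⟩
  have hx0 := (mem_roots_toFinset_iff_rootMultiplicity_pos h0).mp hx
  rw [hs.eq_C_mul_X_sub_C_pow_mul_X_sub_C_pow hxy hsub] at hB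
  obtain ⟨hmult, hsum, hT⟩ := hB.eq_and_add_eq_one_and_mem_TSet hxy
    (leadingCoeff_ne_zero.mpr h0) (by omega)
  obtain rfl : y = x + 1 := by linear_combination hsum - x * CharTwo.two_eq_zero (R := F)
  exact ⟨hmult.symm, hT⟩

lemma IsBUP.two_le_card_roots_toFinset [CharP F 2] (hB : IsBUP B) (hs : B.Splits) (h0 : B ≠ 0)
    (hunit : ¬IsUnit B) : 2 ≤ B.roots.toFinset.card := by
  by_contra! hlt
  obtain ⟨x, hx⟩ := hs.exists_eval_eq_zero fun hd => hunit (isUnit_iff_degree_eq_zero.mpr hd)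
  have hx : x ∈ B.roots.toFinset := by simpa [h0] using hx
  have hx1 := (hB.rootMultiplicity_add_one hs h0 (by omega) hx).1
  have hx1 : x + 1 ∈ B.roots.toFinset := by
    rw [mem_roots_toFinset_iff_rootMultiplicity_pos h0, hx1,
      ← mem_roots_toFinset_iff_rootMultiplicity_pos h0]
    exact hx
  have := card_le_card (insert_subset hx (singleton_subset_iff.mpr hx1))
  rw [card_pair (by simp)] at this
  omega

end Splitting

lemma Polynomial.rootMultiplicity_prod {R ι : Type*} [CommRing R] [IsDomain R] {s : Finset ι}
    {f : ι → R[X]} (h0 : ∏ i ∈ s, f i ≠ 0) (x : R) :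
    rootMultiplicity x (∏ i ∈ s, f i) = ∑ i ∈ s, rootMultiplicity x (f i) := by
  classical
  simp [← count_roots, roots_prod f s h0, Multiset.count_bind]

lemma IsCoprime.disjoint_roots_toFinset {R : Type*} [CommRing R] [IsDomain R] [DecidableEq R]
    {P Q : R[X]} (h : IsCoprime P Q) :
    Disjoint P.roots.toFinset Q.roots.toFinset := by
  refine disjoint_left.mpr fun x hP hQ => not_isUnit_X_sub_C x (h.isUnit_of_dvd' ?_ ?_)
  · exact dvd_iff_isRoot.mpr (Multiset.mem_toFinset.mp hP |> isRoot_of_mem_roots)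
  · exact dvd_iff_isRoot.mpr (Multiset.mem_toFinset.mp hQ |> isRoot_of_mem_roots)

lemma Finset.card_le_two_and_cover_of_pairwise_disjoint {α ι : Type*} [Fintype α] [Fintype ι] (hα : Fintype.card α ≤ 4) (hι : 2 ≤ Fintype.card ι) {Z : ι → Finset α}
    (hdisj : Pairwise (Function.onFun Disjoint Z)) (htwo : ∀ i, 2 ≤ #(Z i)) :
    (∀ i, #(Z i) ≤ 2) ∧ ∀ x, ∃ i, x ∈ Z i := by
  classical
  have hsum : ∑ i, #(Z i) = #(univ.biUnion Z) := (card_biUnion (hdisj.set_pairwise _)).symm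
  have hlow : ∀ s : Finset ι, 2 * #s ≤ ∑ i ∈ s, #(Z i) := fun s => by
    simpa [mul_comm] using card_nsmul_le_sum s (fun i => #(Z i)) 2 fun i _ => htwo i
  refine ⟨fun i => ?_, fun x => ?_⟩
  · have hrest := hlow (univ.erase i)
    rw [card_erase_of_mem (mem_univ i), card_univ] at hrest
    have := add_sum_erase univ (fun i => #(Z i)) (mem_univ i)
    have := card_le_univ (univ.biUnion Z)
    omega
  · by_contra! hx
    have := card_lt_univ_of_notMem (s := univ.biUnion Z) (x := x) (by simpa using hx)
    have hall := hlow univ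
    rw [card_univ] at hall
    omega

lemma IsTriviallyBUP.rootMultiplicity_add_one [CharP F 2] [Finite F] (hF : Nat.card F ≤ 4)
    {A : F[X]} (hA : IsTriviallyBUP A) (hs : A.Splits) (h0 : A ≠ 0) (x : F) :
    rootMultiplicity (x + 1) A = rootMultiplicity x A ∧ rootMultiplicity x A ∈ TSet := by
  classical
  have := Fintype.ofFinite F
  rw [Nat.card_eq_fintype_card] at hF
  obtain ⟨-, r, B, hr, rfl, hB, hcop⟩ := hA
  have hB0 : ∀ i, B i ≠ 0 := fun i => prod_ne_zero_iff.mp h0 i (mem_univ i)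
  have hBs : ∀ i, (B i).Splits := fun i => hs.of_dvd h0 (dvd_prod_of_mem B (mem_univ i))
  obtain ⟨hle, hcover⟩ := card_le_two_and_cover_of_pairwise_disjoint hF (by simp [hr])
    (fun i j hij => (hcop i j hij).disjoint_roots_toFinset)
    (fun i => (hB i).1.two_le_card_roots_toFinset (hBs i) (hB0 i) (hB i).2)
  obtain ⟨i, hi⟩ := hcover x
  obtain ⟨hmult, hT⟩ := (hB i).1.rootMultiplicity_add_one (hBs i) (hB0 i) (hle i) hi
  have hi' : x + 1 ∈ (B i).roots.toFinset := by
    rwa [mem_roots_toFinset_iff_rootMultiplicity_pos (hB0 i), hmult,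
      ← mem_roots_toFinset_iff_rootMultiplicity_pos (hB0 i)]
  have hsingle : ∀ y ∈ (B i).roots.toFinset,
      rootMultiplicity y (∏ j, B j) = rootMultiplicity y (B i) := fun y hy => by
    refine (rootMultiplicity_prod h0 y).trans (sum_eq_single i (fun j _ hji => ?_) (by simp))
    have hy' : y ∉ (B j).roots.toFinset :=
      disjoint_left.mp (hcop i j hji.symm).disjoint_roots_toFinset hy
    rw [mem_roots_toFinset_iff_rootMultiplicity_pos (hB0 j)] at hy'
    omega
  rw [hsingle x hi, hsingle _ hi']
  exact ⟨hmult, hT⟩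

lemma omegaCount_eq_card_roots_toFinset [DecidableEq F] {A : F[X]} (hs : A.Splits) (h0 : A ≠ 0) :
    omegaCount A = #A.roots.toFinset := by
  have hfactors : {P | P.Monic ∧ Irreducible P ∧ P ∣ A} =
      (fun x => X - C x) '' ↑A.roots.toFinset := by
    ext P
    simp only [Set.mem_ofPred_eq, Set.mem_image, mem_coe, Multiset.mem_toFinset, mem_roots h0]
    constructor
    · rintro ⟨hP, hirr, hdvd⟩
      obtain ⟨x, hx⟩ := (hs.of_dvd h0 hdvd).exists_eval_eq_zero
        fun hd => hirr.not_isUnit (isUnit_iff_degree_eq_zero.mpr hd)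
      have hxP : X - C x ∣ P := dvd_iff_isRoot.mpr hx
      exact ⟨x, dvd_iff_isRoot.mp (hxP.trans hdvd), eq_of_monic_of_associated (monic_X_sub_C x) hP
        ((irreducible_X_sub_C x).associated_of_dvd hirr hxP)⟩
    · rintro ⟨x, hx, rfl⟩
      exact ⟨monic_X_sub_C x, irreducible_X_sub_C x, dvd_iff_isRoot.mpr hx⟩
  rw [omegaCount, hfactors, Set.ncard_image_of_injective _ fun x y h => by simpa using h,
    Set.ncard_coe_finset]

lemma omegaCount_eq_nat_card [Finite F] {A : F[X]} (hs : A.Splits) (h0 : A ≠ 0)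
    (hroots : ∀ x, 0 < rootMultiplicity x A) : omegaCount A = Nat.card F := by
  classical
  have := Fintype.ofFinite F
  rw [omegaCount_eq_card_roots_toFinset hs h0, Nat.card_eq_fintype_card, ← card_univ]
  exact congrArg card (eq_univ_of_forall fun x =>
    (mem_roots_toFinset_iff_rootMultiplicity_pos h0).mpr (hroots x))

section PrimitiveCubeRoot

variable [CharP F 2] {α : F}

lemma ne_zero_and_ne_one_of_sq_add_add_one (hα : α ^ 2 + α + 1 = 0) : α ≠ 0 ∧ α ≠ 1 := by
  refine ⟨by rintro rfl; simp at hα, ?_⟩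
  rintro rfl
  exact one_ne_zero (by linear_combination hα - CharTwo.two_eq_zero (R := F))

lemma X_add_C_mul_X_add_C_add_one (hα : α ^ 2 + α + 1 = 0) :
    (X + C α) * (X + C α + 1) = (X ^ 2 + X + 1 : F[X]) := by
  have hCα : C α ^ 2 + C α + 1 = 0 := by simpa using congrArg C hα
  linear_combination hCα + (X * C α - 1) * CharTwo.two_eq_zero (R := F[X])

lemma ne_zero_and_splits_and_rootMultiplicity_of_eq (hα0 : α ≠ 0) (hα1 : α ≠ 1)
    {a b c d : ℕ} {A : F[X]} (hA : A = X ^ a * (X + 1) ^ b * (X + C α) ^ c * (X + C α + 1) ^ d) :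
    A ≠ 0 ∧ A.Splits ∧ rootMultiplicity 0 A = a ∧ rootMultiplicity 1 A = b ∧
      rootMultiplicity α A = c ∧ rootMultiplicity (α + 1) A = d := by
  have hA' : A = (X - C 0) ^ a * (X - C 1) ^ b * (X - C α) ^ c * (X - C (α + 1)) ^ d := by
    simp only [hA, CharTwo.sub_eq_add, C_0, add_zero, C_1, C_add, add_assoc]
  have hα1' : α + 1 ≠ 0 := fun h => hα1 (by linear_combination h - CharTwo.two_eq_zero (R := F))
  rw [hA']
  refine ⟨by simp only [ne_eq, mul_eq_zero, pow_eq_zero_iff', X_sub_C_ne_zero, false_and,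
    or_self, not_false_eq_true], ((((Splits.X_sub_C _).pow _).mul ((Splits.X_sub_C _).pow _)).mul
      ((Splits.X_sub_C _).pow _)).mul ((Splits.X_sub_C _).pow _), ?_⟩
  classical
  simp (disch := simp only [ne_eq, mul_eq_zero, pow_eq_zero_iff', X_sub_C_ne_zero, false_and,
      or_self, not_false_eq_true]) only [rootMultiplicity_mul, rootMultiplicity_pow,
    rootMultiplicity_X_sub_C]
  simp [hα0, hα1, hα0.symm, hα1.symm, hα1'.symm, hα1']

end PrimitiveCubeRoot

theorem stmt12_general (α : F4) (hα : α ^ 2 + α + 1 = 0) (a b c d : ℕ)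
    (A : Polynomial F4)
    (hA : A = X ^ a * (X + 1) ^ b * (X + C α) ^ c * (X + C α + 1) ^ d)
    (htriv : IsTriviallyBUP A) :
    omegaCount A = 4 ∧ a ∈ TSet ∧ b ∈ TSet ∧ c ∈ TSet ∧ d ∈ TSet ∧ a = b ∧ c = d ∧
      ∃ A₁ ∈ SigmaSet, ∃ A₂ ∈ SigmaSet, A = A₁ * A₂ := by
  have hcard : Nat.card F4 = 4 := GaloisField.card 2 2 two_ne_zero
  obtain ⟨hα0, hα1⟩ := ne_zero_and_ne_one_of_sq_add_add_one hα
  obtain ⟨h0, hs, hm0, hm1, hmα, hmα1⟩ := ne_zero_and_splits_and_rootMultiplicity_of_eq hα0 hα1 hA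
  have hkey := htriv.rootMultiplicity_add_one hcard.le hs h0
  obtain ⟨hba, haT⟩ := hkey 0
  obtain ⟨hdc, hcT⟩ := hkey α
  rw [zero_add, hm1, hm0] at hba
  rw [hmα1, hmα] at hdc
  rw [hm0] at haT
  rw [hmα] at hcT
  refine ⟨?_, haT, hba ▸ haT, hcT, hdc ▸ hcT, hba.symm, hdc.symm,
    _, ⟨a, haT, Or.inl rfl⟩, _, ⟨c, hcT, Or.inr rfl⟩, ?_⟩
  · rw [omegaCount_eq_nat_card hs h0 fun x => (hkey x).2.1, hcard]
  · rw [hA, hba, hdc, ← X_add_C_mul_X_add_C_add_one hα,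
      show (X ^ 2 + X : F4[X]) = X * (X + 1) by ring, mul_pow, mul_pow]
    ring

theorem stmt12 (α : F4) (hα : α ^ 2 + α + 1 = 0) (a b c d : ℕ)
    (A : Polynomial F4)
    (hA : A = X ^ a * (X + 1) ^ b * (X + C α) ^ c * (X + C α + 1) ^ d)
    (htriv : IsTriviallyBUP A) (hω : 3 ≤ omegaCount A) :
    omegaCount A = 4 ∧ a ∈ TSet ∧ b ∈ TSet ∧ c ∈ TSet ∧ d ∈ TSet ∧ a = b ∧ c = d ∧
      ∃ A₁ ∈ SigmaSet, ∃ A₂ ∈ SigmaSet, A = A₁ * A₂ :=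
  stmt12_general α hα a b c d A hA htriv
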